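/- arXiv:2306.13944 — 5 statements merged into one kernel-verified Lean document; each statement's English description precedes it below -/
import Mathlib

section
/- There exists a policy π : S → A such that V^π(s) = 0 for every safe state s ∈ S_safe. Consequently, the optimal cost value function satisfies V*(s) = 0 for every s ∈ S_safe. -/
noncomputable section

/-- Trajectory of policy `π` from state `s` after `n` steps. -/
def traj {S A : Type*} (step : S → A → S) (π : S → A) (s : S) (n : ℕ) : S :=
  (fun x => step x (π x))^[n] s

/-- Cost value function: `γ ^ τ_π(s)` where `τ_π(s)` is the first failure time,
and `0` if the trajectory never visits `Sfail`. -/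
noncomputable def Vc {S A : Type*} (step : S → A → S) (Sfail : Set S) (γ : ℝ)
    (π : S → A) (s : S) : ℝ :=
  haveI : DecidablePred fun n => traj step π s n ∈ Sfail := fun _ => Classical.dec _
  haveI : Decidable (∃ n, traj step π s n ∈ Sfail) := Classical.dec _
  if h : ∃ n, traj step π s n ∈ Sfail then γ ^ Nat.find h else 0

/-- Action-cost function `Q^π(s, a) = γ · V^π(step s a)`. -/
noncomputable def Qc {S A : Type*} (step : S → A → S) (Sfail : Set S) (γ : ℝ)
    (π : S → A) (s : S) (a : A) : ℝ :=
  γ * Vc step Sfail γ π (step s a)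

/-- Optimal cost value function `V*(s) = ⨅_π V^π(s)`. -/
noncomputable def Vstar {S A : Type*} (step : S → A → S) (Sfail : Set S) (γ : ℝ)
    (s : S) : ℝ :=
  ⨅ π : S → A, Vc step Sfail γ π s

/-- Optimal action-cost function `Q*(s, a) = ⨅_π Q^π(s, a)`. -/
noncomputable def Qstar {S A : Type*} (step : S → A → S) (Sfail : Set S) (γ : ℝ)
    (s : S) (a : A) : ℝ :=
  ⨅ π : S → A, Qc step Sfail γ π s a

/-- There is a policy with zero cost value on all safe states; consequently the
optimal cost value function vanishes on safe states. -/
theorem stmt4 {S A : Type*} [Nonempty A] (step : S → A → S) (γ : ℝ)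
    (hγ0 : 0 < γ) (hγ1 : γ < 1)
    (Sfail Sdead Ssafe : Set S)
    (hpart : Ssafe = (Sfail ∪ Sdead)ᶜ) (hdisj : Disjoint Sfail Sdead)
    (hsa : ∀ s ∈ Ssafe, ∃ a : A, step s a ∈ Ssafe) :
    (∃ π : S → A, ∀ s ∈ Ssafe, Vc step Sfail γ π s = 0) ∧
      (∀ s ∈ Ssafe, Vstar step Sfail γ s = 0) := by
  classical
  -- build policy
  set π : S → A := fun s =>
    if h : s ∈ Ssafe then (hsa s h).choose else Classical.arbitrary A with hπ
  have hstay : ∀ s ∈ Ssafe, step s (π s) ∈ Ssafe := by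
    intro s hs
    simp only [hπ, dif_pos hs]
    exact (hsa s hs).choose_spec
  have htraj : ∀ s ∈ Ssafe, ∀ n, traj step π s n ∈ Ssafe := by
    intro s hs n
    induction n with
    | zero => simpa [traj] using hs
    | succ n ih =>
      have : traj step π s (n+1) = step (traj step π s n) (π (traj step π s n)) := by
        simp [traj, Function.iterate_succ_apply']
      rw [this]
      exact hstay _ ih
  have hVzero : ∀ s ∈ Ssafe, Vc step Sfail γ π s = 0 := by
    intro s hs
    have hno : ¬ ∃ n, traj step π s n ∈ Sfail := by
      rintro ⟨n, hn⟩
      have := htraj s hs n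
      rw [hpart] at this
      exact this (Or.inl hn)
    simp [Vc, hno]
  refine ⟨⟨π, hVzero⟩, ?_⟩
  intro s hs
  have hnonneg : ∀ σ : S → A, 0 ≤ Vc step Sfail γ σ s := by
    intro σ
    unfold Vc
    split
    · positivity
    · exact le_refl 0
  have hbdd : BddBelow (Set.range fun σ : S → A => Vc step Sfail γ σ s) :=
    ⟨0, by rintro x ⟨σ, rfl⟩; exact hnonneg σ⟩
  refine le_antisymm ?_ (le_ciInf hnonneg)
  calc Vstar step Sfail γ s ≤ Vc step Sfail γ π s := ciInf_le hbdd π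
  _ = 0 := hVzero s hs
end
end

section
/- The optimal safety critic with threshold γ^{H−1} exactly discovers the dead-ends: for every state s ∈ S, we have s ∈ S_safe if and only if V*(s) < γ^{H−1}; equivalently, s ∈ S_dead ∪ S_fail if and only if V*(s) ≥ γ^{H−1}. -/
noncomputable section

/-- The optimal safety critic with threshold `γ^{H-1}` exactly discovers dead-ends:
`s` is safe iff `V*(s) < γ^{H-1}`, equivalently `s` is a dead-end or failure state
iff `V*(s) ≥ γ^{H-1}`. -/
theorem stmt5 {S A : Type*} [Nonempty A] (step : S → A → S) (γ : ℝ)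
    (hγ0 : 0 < γ) (hγ1 : γ < 1)
    (Sfail Sdead Ssafe : Set S)
    (hpart : Ssafe = (Sfail ∪ Sdead)ᶜ) (hdisj : Disjoint Sfail Sdead)
    (hsa : ∀ s ∈ Ssafe, ∃ a : A, step s a ∈ Ssafe)
    (H : ℕ) (hH : 1 ≤ H)
    (hhorizon : ∀ s ∈ Sdead, ∀ π : S → A, ∃ n ≤ H - 1, traj step π s n ∈ Sfail) :
    ∀ s : S, (s ∈ Ssafe ↔ Vstar step Sfail γ s < γ ^ (H - 1)) ∧
      (s ∈ Sdead ∪ Sfail ↔ γ ^ (H - 1) ≤ Vstar step Sfail γ s) := by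

  classical
  have hpow : (0:ℝ) < γ ^ (H-1) := pow_pos hγ0 _
  have hVc_nonneg : ∀ π t, 0 ≤ Vc step Sfail γ π t := by
    intro π t
    unfold Vc
    split
    · exact le_of_lt (pow_pos hγ0 _)
    · exact le_refl 0
  have hbdd : ∀ t : S, BddBelow (Set.range fun π : S → A => Vc step Sfail γ π t) :=
    fun t => ⟨0, by rintro _ ⟨π, rfl⟩; exact hVc_nonneg π t⟩
  have key1 : ∀ t ∈ Ssafe, Vstar step Sfail γ t < γ^(H-1) := by
    intro t ht
    set π0 : S → A := fun u => if h : u ∈ Ssafe then (hsa u h).choose else Classical.arbitrary A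
      with hπ0
    have hsafe : ∀ n, traj step π0 t n ∈ Ssafe := by
      intro n
      induction n with
      | zero => exact ht
      | succ n ih =>
        have : traj step π0 t (n+1) = step (traj step π0 t n) (π0 (traj step π0 t n)) := by
          simp [traj, Function.iterate_succ_apply']
        rw [this, hπ0]
        dsimp only
        rw [dif_pos ih]
        exact (hsa _ ih).choose_spec
    have hVc0 : Vc step Sfail γ π0 t = 0 := by
      unfold Vc
      rw [dif_neg]
      rintro ⟨n, hn⟩
      have := hsafe n
      rw [hpart] at this
      exact this (Or.inl hn)
    calc Vstar step Sfail γ t ≤ Vc step Sfail γ π0 t := ciInf_le (hbdd t) π0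
    _ = 0 := hVc0
    _ < _ := hpow
  have key2 : ∀ t ∈ Sdead ∪ Sfail, γ^(H-1) ≤ Vstar step Sfail γ t := by
    intro t ht
    apply le_ciInf
    intro π
    unfold Vc
    rcases ht with hd | hf
    · obtain ⟨n, hn, hfail⟩ := hhorizon t hd π
      have hex : ∃ n, traj step π t n ∈ Sfail := ⟨n, hfail⟩
      rw [dif_pos hex]
      have hle : Nat.find hex ≤ H - 1 := le_trans (Nat.find_le hfail) hn
      exact pow_le_pow_of_le_one (le_of_lt hγ0) (le_of_lt hγ1) hle
    · have h0 : traj step π t 0 ∈ Sfail := hf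
      have hex : ∃ n, traj step π t n ∈ Sfail := ⟨0, h0⟩
      rw [dif_pos hex]
      have : Nat.find hex = 0 := Nat.find_eq_zero hex |>.mpr h0
      rw [this, pow_zero]
      exact pow_le_one₀ (le_of_lt hγ0) (le_of_lt hγ1)
  intro s
  by_cases hs : s ∈ Ssafe
  · have h1 := key1 s hs
    have hnot : s ∉ Sdead ∪ Sfail := by
      rw [hpart] at hs
      intro h
      exact hs (h.elim Or.inr Or.inl)
    exact ⟨⟨fun _ => h1, fun _ => hs⟩,
      ⟨fun h => absurd h hnot, fun h => absurd h1 (not_lt.mpr h)⟩⟩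
  · have hmem : s ∈ Sdead ∪ Sfail := by
      rw [hpart] at hs
      rcases not_not.mp (fun h => hs h) with h | h
      · exact Or.inr h
      · exact Or.inl h
    have h2 := key2 s hmem
    exact ⟨⟨fun h => absurd h hs, fun h => absurd h (not_lt.mpr h2)⟩,
      ⟨fun _ => h2, fun _ => hmem⟩⟩
end
end

section
/- Set the safety threshold ε_safe = γ^H. For every state s ∈ S and action a ∈ A, if Q*(s, a) < γ^H then step s a ∈ S_safe. That is, any single action accepted by the optimal safety critic under threshold γ^H leads to a safe state. -/
noncomputable section

/-- Any single action accepted by the optimal safety critic under threshold `γ^H`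
leads to a safe state. -/
theorem stmt6 {S A : Type*} [Nonempty A] (step : S → A → S) (γ : ℝ)
    (hγ0 : 0 < γ) (hγ1 : γ < 1)
    (Sfail Sdead Ssafe : Set S)
    (hpart : Ssafe = (Sfail ∪ Sdead)ᶜ) (hdisj : Disjoint Sfail Sdead)
    (hsa : ∀ s ∈ Ssafe, ∃ a : A, step s a ∈ Ssafe)
    (H : ℕ) (hH : 1 ≤ H)
    (hhorizon : ∀ s ∈ Sdead, ∀ π : S → A, ∃ n ≤ H - 1, traj step π s n ∈ Sfail) :
    ∀ (s : S) (a : A), Qstar step Sfail γ s a < γ ^ H → step s a ∈ Ssafe := by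
  intro s a hQ
  by_contra hns
  -- step s a ∈ Sfail ∪ Sdead
  have hmem : step s a ∈ Sfail ∪ Sdead := by
    by_contra h
    rw [hpart] at hns
    exact hns (by simpa using h)
  have hγle1 : γ ≤ 1 := le_of_lt hγ1
  -- lower bound on Vc for every policy
  have hVc : ∀ π : S → A, γ ^ (H - 1) ≤ Vc step Sfail γ π (step s a) := by
    intro π
    classical
    unfold Vc
    rcases hmem with hf | hd
    · have hex : ∃ n, traj step π (step s a) n ∈ Sfail := ⟨0, hf⟩
      rw [dif_pos hex]
      have : Nat.find hex = 0 := Nat.find_eq_zero hex |>.mpr hf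
      rw [this]
      simpa using pow_le_one₀ (le_of_lt hγ0) hγle1
    · obtain ⟨n, hn, hfn⟩ := hhorizon _ hd π
      have hex : ∃ n, traj step π (step s a) n ∈ Sfail := ⟨n, hfn⟩
      rw [dif_pos hex]
      have hfind : Nat.find hex ≤ H - 1 := le_trans (Nat.find_le hfn) hn
      exact pow_le_pow_of_le_one (le_of_lt hγ0) hγle1 hfind
  have hQge : γ ^ H ≤ Qstar step Sfail γ s a := by
    apply le_ciInf
    intro π
    unfold Qc
    calc γ ^ H = γ * γ ^ (H - 1) := by
          rw [← pow_succ']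
          congr 1
          omega
      _ ≤ γ * Vc step Sfail γ π (step s a) :=
          mul_le_mul_of_nonneg_left (hVc π) (le_of_lt hγ0)
  linarith
end
end

section
/- Set the safety threshold ε_safe = γ^H. Let β : S → A be any (behavior-corrected) policy such that for every s ∈ S_safe, Q*(s, β s) < γ^H. Then for every initial state s₀ ∈ S_safe and every n ∈ ℕ, traj_β(s₀, n) ∈ S_safe. In particular, the agent never reaches a dead-end state or a failure state. -/
noncomputable section

lemma Vc_eq_of_exists {S A : Type*} (step : S → A → S) (Sfail : Set S) (γ : ℝ)
    (π : S → A) (s : S) (h : ∃ n, traj step π s n ∈ Sfail) :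
    Vc step Sfail γ π s = γ ^ (@Nat.find _ (fun _ => Classical.dec _) h) := by
  haveI : DecidablePred fun n => traj step π s n ∈ Sfail := fun _ => Classical.dec _
  unfold Vc
  rw [dif_pos h]

lemma ge_of_Vc {S A : Type*} (step : S → A → S) (Sfail : Set S) (γ : ℝ)
    (hγ0 : 0 < γ) (hγ1 : γ < 1) (π : S → A) (s : S) (m : ℕ)
    (h : ∃ n ≤ m, traj step π s n ∈ Sfail) :
    γ ^ m ≤ Vc step Sfail γ π s := by
  obtain ⟨n, hn, hmem⟩ := h
  have hex : ∃ n, traj step π s n ∈ Sfail := ⟨n, hmem⟩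
  rw [Vc_eq_of_exists step Sfail γ π s hex]
  have hfind : (@Nat.find _ (fun _ => Classical.dec _) hex) ≤ m :=
    le_trans (@Nat.find_le _ _ (fun _ => Classical.dec _) hex hmem) hn
  exact pow_le_pow_of_le_one hγ0.le hγ1.le hfind

/-- A behavior-corrected policy whose actions at safe states are accepted by the
optimal safety critic under threshold `γ^H` keeps the agent in safe states forever;
in particular it never reaches a dead-end state or a failure state. -/
theorem stmt7 {S A : Type*} [Nonempty A] (step : S → A → S) (γ : ℝ)
    (hγ0 : 0 < γ) (hγ1 : γ < 1)
    (Sfail Sdead Ssafe : Set S)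
    (hpart : Ssafe = (Sfail ∪ Sdead)ᶜ) (hdisj : Disjoint Sfail Sdead)
    (hsa : ∀ s ∈ Ssafe, ∃ a : A, step s a ∈ Ssafe)
    (H : ℕ) (hH : 1 ≤ H)
    (hhorizon : ∀ s ∈ Sdead, ∀ π : S → A, ∃ n ≤ H - 1, traj step π s n ∈ Sfail)
    (β : S → A) (hβ : ∀ s ∈ Ssafe, Qstar step Sfail γ s (β s) < γ ^ H) :
    ∀ s₀ ∈ Ssafe, ∀ n : ℕ, traj step β s₀ n ∈ Ssafe ∧
      traj step β s₀ n ∉ Sdead ∧ traj step β s₀ n ∉ Sfail := by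
  have key : ∀ s ∈ Ssafe, step s (β s) ∈ Ssafe := by
    intro s hs
    by_contra hns
    have hmem : step s (β s) ∈ Sfail ∪ Sdead := by
      rw [hpart, Set.mem_compl_iff, not_not] at hns; exact hns
    have hge : γ ^ H ≤ Qstar step Sfail γ s (β s) := by
      apply le_ciInf
      intro π
      unfold Qc
      rcases hmem with hf | hd
      · have : Vc step Sfail γ π (step s (β s)) = 1 := by
          have hex : ∃ n, traj step π (step s (β s)) n ∈ Sfail := ⟨0, hf⟩
          rw [Vc_eq_of_exists step Sfail γ π _ hex]
          have : (@Nat.find _ (fun _ => Classical.dec _) hex) = 0 :=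
            Nat.eq_zero_of_le_zero (@Nat.find_le _ _ (fun _ => Classical.dec _) hex hf)
          rw [this, pow_zero]
        rw [this, mul_one]
        calc γ ^ H ≤ γ ^ 1 := pow_le_pow_of_le_one hγ0.le hγ1.le hH
        _ = γ := pow_one γ
      · have hV : γ ^ (H - 1) ≤ Vc step Sfail γ π (step s (β s)) :=
          ge_of_Vc step Sfail γ hγ0 hγ1 π _ (H - 1) (hhorizon _ hd π)
        calc γ ^ H = γ * γ ^ (H - 1) := by
              rw [← pow_succ']
              congr 1
              omega
        _ ≤ γ * Vc step Sfail γ π (step s (β s)) := by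
              exact mul_le_mul_of_nonneg_left hV hγ0.le
    exact absurd (hβ s hs) (not_lt.mpr hge)
  intro s₀ hs₀ n
  have hsafe : traj step β s₀ n ∈ Ssafe := by
    induction n with
    | zero => exact hs₀
    | succ n ih =>
      have : traj step β s₀ (n + 1) = step (traj step β s₀ n) (β (traj step β s₀ n)) := by
        simp [traj, Function.iterate_succ_apply']
      rw [this]
      exact key _ ih
  refine ⟨hsafe, ?_, ?_⟩ <;> · rw [hpart] at hsafe; simp at hsafe; tauto
end
end

section
/- The bound V^π(s) < γ^{H−1} on safe states is not guaranteed for arbitrary policies: there exist a deterministic SMDP (a state space S, nonempty action space A, transition function step : S → A → S, a partition of S into pairwise disjoint sets S_fail, S_dead, S_safe satisfying the safe-action assumption and the dead-end horizon assumption for some H ≥ 1 and γ ∈ (0,1)), a safe state s ∈ S_safe, and a policy π : S → A such that V^π(s) ≥ γ^{H−1}. Hence the safety critic of a suboptimal policy π, with threshold γ^{H−1}, can misclassify a safe state as a dead-end. -/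
/-!
A safe state may still have an action that leads straight to failure. In the three-state model
below the dead end fails after one step whatever is played (horizon `H = 2`), while the policy
that takes the failing action at the safe state also fails after one step, so its value there is
`γ = γ ^ (H - 1)`.
-/

noncomputable section

theorem Vc_eq_pow_of_first_failure {S A : Type*} {step : S → A → S} {Sfail : Set S}
    (γ : ℝ) {π : S → A} {s : S} {n : ℕ} (hn : traj step π s n ∈ Sfail)
    (hlt : ∀ m < n, traj step π s m ∉ Sfail) :
    Vc step Sfail γ π s = γ ^ n := by
  have hfail : ∃ k, traj step π s k ∈ Sfail := ⟨n, hn⟩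
  classical
  rw [Vc, dif_pos hfail]
  congr
  exact (Nat.find_eq_iff hfail).2 ⟨hn, hlt⟩

inductive ToyState
  | fail
  | dead
  | safe

namespace ToyState

def step : ToyState → Bool → ToyState
  | safe, true => safe
  | _, _ => fail

def Sfail : Set ToyState := {fail}

def Sdead : Set ToyState := {dead}

def Ssafe : Set ToyState := (Sfail ∪ Sdead)ᶜ

theorem mem_Ssafe_iff (s : ToyState) : s ∈ Ssafe ↔ s = safe := by
  cases s <;> simp [Ssafe, Sfail, Sdead]

theorem traj_one_of_ne_safe (π : ToyState → Bool) {s : ToyState} (hs : s ≠ safe) :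
    traj step π s 1 = fail := by
  cases s <;> simp_all [traj, step]

theorem Vc_safe_of_play_false (γ : ℝ) :
    Vc step Sfail γ (fun _ => false) safe = γ := by
  conv_rhs => rw [← pow_one γ]
  refine Vc_eq_pow_of_first_failure γ (n := 1) (by simp [traj, step, Sfail]) ?_
  intro m hm
  obtain rfl : m = 0 := by omega
  simp [traj, Sfail]

end ToyState

open ToyState in
/-- The bound `V^π(s) < γ^{H-1}` on safe states fails for arbitrary (suboptimal)
policies: there is a deterministic SMDP satisfying the safe-action and dead-end
horizon assumptions, a safe state `s`, and a policy `π` with `V^π(s) ≥ γ^{H-1}`. -/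
theorem stmt10 :
    ∃ (S A : Type) (_ : Nonempty A) (step : S → A → S) (γ : ℝ)
      (Sfail Sdead Ssafe : Set S) (H : ℕ) (s : S) (π : S → A),
      0 < γ ∧ γ < 1 ∧ 1 ≤ H ∧
      Ssafe = (Sfail ∪ Sdead)ᶜ ∧ Disjoint Sfail Sdead ∧
      (∀ s ∈ Ssafe, ∃ a : A, step s a ∈ Ssafe) ∧
      (∀ s ∈ Sdead, ∀ π : S → A, ∃ n ≤ H - 1, traj step π s n ∈ Sfail) ∧
      s ∈ Ssafe ∧ γ ^ (H - 1) ≤ Vc step Sfail γ π s := by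
  refine ⟨ToyState, Bool, inferInstance, step, 1 / 2, Sfail, Sdead, Ssafe, 2, safe,
    fun _ => false, by norm_num, by norm_num, Nat.le_succ 1, rfl, by simp [Sfail, Sdead],
    ?safeAction, ?deadHorizon, (mem_Ssafe_iff safe).2 rfl, ?_⟩
  case safeAction =>
    intro s hs
    rw [(mem_Ssafe_iff s).1 hs]
    exact ⟨true, (mem_Ssafe_iff safe).2 rfl⟩
  case deadHorizon =>
    rintro s rfl π
    exact ⟨1, le_rfl, by rw [traj_one_of_ne_safe π (by simp)]; rfl⟩
  rw [Vc_safe_of_play_false]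
  norm_num
end
end
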